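/- Let m ≥ 3, n ≥ 3, 2 ≤ l ≤ n−1 and k ≥ 0. The number of proper colorings of the signed book graph (B(m,n), σ_l) with color set {−k,…,−1,0,1,…,k} equals γ_m(2k+1)^{n−l} times the number of proper colorings of B^{uv}(m,l) with color set {−k,…,−1,0,1,…,k}. -/

import Mathlib

/-- Vertices of the book graph `B(m,n)`: `Sum.inl false` is `u`, `Sum.inl true` is `v`,
and `Sum.inr (i, j)` is the vertex `u_{j+1}^{i+1}`. -/
abbrev BookVertex (m n : ℕ) := Bool ⊕ (Fin n × Fin (m - 2))

/-- Adjacency relation of the book graph `B(m,n)`. -/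
def bookAdj (m n : ℕ) : BookVertex m n → BookVertex m n → Prop
  | Sum.inl a, Sum.inl b => a ≠ b
  | Sum.inl false, Sum.inr (_, j) => j.val = 0
  | Sum.inl true, Sum.inr (_, j) => j.val = m - 3
  | Sum.inr (_, j), Sum.inl false => j.val = 0
  | Sum.inr (_, j), Sum.inl true => j.val = m - 3
  | Sum.inr (i, j), Sum.inr (i', j') => i = i' ∧ (j.val + 1 = j'.val ∨ j'.val + 1 = j.val)

/-- The signature `σ_l` of `B(m,n)`: exactly the edges `u u_1^1, …, u u_1^l` are negative. -/
def sigmaL (m n l : ℕ) : BookVertex m n → BookVertex m n → ℤ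
  | Sum.inl false, Sum.inr (i, j) => if j.val = 0 ∧ i.val < l then -1 else 1
  | Sum.inr (i, j), Sum.inl false => if j.val = 0 ∧ i.val < l then -1 else 1
  | _, _ => 1

/-- The signature of `B^{uv}(m,n)`: exactly the edge `uv` is negative. -/
def sigmaUV (m n : ℕ) : BookVertex m n → BookVertex m n → ℤ
  | Sum.inl _, Sum.inl _ => -1
  | _, _ => 1

/-- `γ_m(x) = ∑_{i=0}^{m-2} (-1)^i (x-1)^{m-2-i}`. -/
def gammaP (m : ℕ) (x : ℤ) : ℤ := ∑ i ∈ Finset.range (m - 1), (-1) ^ i * (x - 1) ^ (m - 2 - i)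

open Finset

/-!
Fix the colors `a` of `u` and `b` of `v`. The pages are then independent paths on `m - 2`
vertices whose ends must avoid `±a` and `b`; peeling off one vertex at a time and using
`γ_{m+1}(q) = (q - 1) γ_m(q) + (-1)^(m-1)` shows that such a path has `γ_m(q) + [a' = b] (-1)^(m-3)`
colorings from `q` colors when its first end must avoid `a'`. In `(B(m,n), σ_l)` we have `a ≠ b`,
so each of the `n - l` positive pages contributes exactly `γ_m(q)`, and the substitution `a ↦ -a`
(the color set is symmetric) turns the remaining sum over `a ≠ b` of the `l` negative pages into
the sum over `a ≠ -b` that counts the colorings of `B^{uv}(m,l)`.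
-/

lemma gammaP_add_two (m : ℕ) (x : ℤ) :
    gammaP (m + 2) x = (x - 1) * gammaP (m + 1) x + (-1) ^ m := by
  rw [gammaP, gammaP, show m + 2 - 1 = m + 1 by omega, Nat.add_sub_cancel, sum_range_succ,
    mul_sum, Nat.sub_self, pow_zero, mul_one]
  congr 1
  refine sum_congr rfl fun i hi => ?_
  rw [show m - i = (m + 1 - 2 - i) + 1 by grind]
  ring

lemma gammaP_three (x : ℤ) : gammaP 3 x = x - 2 := by
  rw [gammaP, show 3 - 1 = 2 from rfl, sum_range_succ, sum_range_one]
  ring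

section Path

variable {α : Type*} [DecidableEq α] (S : Finset α)

/-- A page of the book, with `a` and `b` the colors its ends see at `u` and `v`. -/
def IsPathColoring (t : ℕ) (a b : α) (d : Fin (t + 1) → α) : Prop :=
  (∀ j, d j ∈ S) ∧ (∀ j : Fin t, d j.castSucc ≠ d j.succ) ∧ d 0 ≠ a ∧ d (Fin.last t) ≠ b

instance (t : ℕ) (a b : α) : Finite {d // IsPathColoring S t a b d} :=
  Finite.of_injective (fun d j => (⟨d.1 j, d.2.1 j⟩ : S)) fun _ _ h =>
    Subtype.ext <| funext fun j => congrArg Subtype.val (congrFun h j)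

noncomputable def pathCount (t : ℕ) (a b : α) : ℕ :=
  Nat.card {d // IsPathColoring S t a b d}

lemma pathCount_zero (a b : α) : pathCount S 0 a b = #((S.erase a).erase b) := by
  rw [pathCount, ← Nat.card_eq_finsetCard]
  refine Nat.card_congr
    { toFun d := ⟨d.1 0, ?_⟩
      invFun x := ⟨fun _ => x.1, ?_⟩
      left_inv d := Subtype.ext <| funext fun j => by rw [Fin.fin_one_eq_zero j]
      right_inv x := rfl }
  · obtain ⟨hS, -, ha, hb⟩ := d.2
    exact mem_erase.2 ⟨hb, mem_erase.2 ⟨ha, hS 0⟩⟩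
  · obtain ⟨hb, ha, hS⟩ : x.1 ≠ b ∧ x.1 ≠ a ∧ x.1 ∈ S := by
      simpa only [mem_erase] using x.2
    exact ⟨fun _ => hS, fun j => j.elim0, ha, hb⟩

lemma isPathColoring_cons_iff {t : ℕ} {a b x : α} {d : Fin (t + 1) → α} :
    IsPathColoring S (t + 1) a b (Fin.cons x d) ↔ x ∈ S.erase a ∧ IsPathColoring S t x b d := by
  simp only [IsPathColoring, Fin.forall_fin_succ, Fin.cons_zero, Fin.cons_succ, mem_erase,
    ← Fin.succ_castSucc, ← Fin.succ_last, Fin.castSucc_zero]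
  tauto

def pathConsEquiv (t : ℕ) (a b : α) :
    {d // IsPathColoring S (t + 1) a b d} ≃ Σ x : S.erase a, {d // IsPathColoring S t x b d} where
  toFun d :=
    have h := (isPathColoring_cons_iff S).1 (by rw [Fin.cons_self_tail]; exact d.2)
    ⟨⟨d.1 0, h.1⟩, ⟨Fin.tail d.1, h.2⟩⟩
  invFun p := ⟨Fin.cons p.1 p.2.1, (isPathColoring_cons_iff S).2 ⟨p.1.2, p.2.2⟩⟩
  left_inv d := Subtype.ext (Fin.cons_self_tail d.1)
  right_inv p := Sigma.subtype_ext rfl rfl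

lemma pathCount_succ (t : ℕ) (a b : α) :
    pathCount S (t + 1) a b = ∑ x ∈ S.erase a, pathCount S t x b := by
  rw [pathCount, Nat.card_congr (pathConsEquiv S t a b), Nat.card_sigma]
  exact sum_coe_sort (S.erase a) (fun x => pathCount S t x b)

theorem pathCount_eq (t : ℕ) {a b : α} (ha : a ∈ S) (hb : b ∈ S) :
    (pathCount S t a b : ℤ) = gammaP (t + 3) #S + if a = b then (-1) ^ t else 0 := by
  induction t generalizing a with
  | zero =>
    rw [pathCount_zero, gammaP_three]
    have hS := card_erase_add_one ha
    by_cases hab : a = b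
    · subst hab
      rw [erase_idem, if_pos rfl]
      push_cast [← hS]
      ring
    · have hab' := card_erase_add_one (mem_erase.2 ⟨Ne.symm hab, hb⟩)
      rw [if_neg hab]
      push_cast [← hS, ← hab']
      ring
  | succ t ih =>
    have hS := card_erase_add_one ha
    rw [pathCount_succ, gammaP_add_two, Nat.cast_sum,
      sum_congr rfl fun x hx => ih (mem_of_mem_erase hx), sum_add_distrib, sum_const,
      sum_ite_eq' (S.erase a) b, nsmul_eq_mul]
    by_cases hab : a = b
    · subst hab
      rw [if_neg (notMem_erase a S), if_pos rfl]
      push_cast [← hS]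
      ring
    · rw [if_pos (mem_erase.2 ⟨Ne.symm hab, hb⟩), if_neg hab]
      push_cast [← hS]
      ring

end Path

/-- `uv` has sign `δ`, `u u_1^{i+1}` has sign `ε i`, and all other edges are positive. -/
def bookSignature (m n : ℕ) (δ : ℤ) (ε : Fin n → ℤ) : BookVertex m n → BookVertex m n → ℤ
  | Sum.inl _, Sum.inl _ => δ
  | Sum.inl false, Sum.inr (i, j) => if j.val = 0 then ε i else 1
  | Sum.inr (i, j), Sum.inl false => if j.val = 0 then ε i else 1
  | _, _ => 1

lemma sigmaL_eq_bookSignature (m n l : ℕ) :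
    sigmaL m n l = bookSignature m n 1 fun i => if i.val < l then -1 else 1 := by
  funext x y
  rcases x with (_ | _) | _ <;> rcases y with (_ | _) | _ <;>
    simp only [sigmaL, bookSignature, ite_and]

lemma sigmaUV_eq_bookSignature (m n : ℕ) : sigmaUV m n = bookSignature m n (-1) 1 := by
  funext x y
  rcases x with (_ | _) | _ <;> rcases y with (_ | _) | _ <;>
    simp only [sigmaUV, bookSignature, Pi.one_apply, ite_self]

/-- Proper colorings from `S` of the single edge `uv` with sign `δ` (the spine of the book). -/
def spineColorings (S : Finset ℤ) (δ : ℤ) : Finset (ℤ × ℤ) :=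
  (S ×ˢ S).filter fun p => p.1 ≠ δ * p.2

lemma ne_mul_symm {M : Type*} [Monoid M] {s x y : M} (hs : s * s = 1) (h : x ≠ s * y) : y ≠ s * x := by
  rintro rfl
  rw [← mul_assoc, hs, one_mul] at h
  exact h rfl

section Book

variable {t n : ℕ} {δ : ℤ} {ε : Fin n → ℤ}

lemma exists_castSucc_succ {j j' : Fin (t + 1)} (h : j.val + 1 = j'.val) :
    ∃ s : Fin t, s.castSucc = j ∧ s.succ = j' :=
  ⟨⟨j, by omega⟩, rfl, Fin.ext h⟩

theorem isProperBookColoring_iff (S : Finset ℤ) (hδ : δ * δ = 1) (hε : ∀ i, ε i * ε i = 1)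
    (c : BookVertex (t + 3) n → ℤ) :
    ((∀ x, c x ∈ S) ∧
        ∀ x y, bookAdj (t + 3) n x y → c x ≠ bookSignature (t + 3) n δ ε x y * c y) ↔
      (c (.inl false), c (.inl true)) ∈ spineColorings S δ ∧
        ∀ i, IsPathColoring S t (ε i * c (.inl false)) (c (.inl true))
          fun j => c (.inr (i, j)) := by
  constructor
  · rintro ⟨hS, hc⟩
    refine ⟨mem_filter.2 ⟨mem_product.2 ⟨hS _, hS _⟩, hc (.inl false) (.inl true) (by simp [bookAdj])⟩,
      fun i => ⟨fun j => hS _, fun j => ?_, ?_, ?_⟩⟩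
    · simpa [bookSignature] using hc _ _ (show bookAdj (t + 3) n (.inr (i, j.castSucc))
        (.inr (i, j.succ)) from ⟨rfl, .inl rfl⟩)
    · simpa [bookSignature] using hc (.inr (i, (0 : Fin (t + 1)))) (.inl false) (by simp [bookAdj])
    · simpa [bookSignature] using hc (.inr (i, Fin.last t)) (.inl true) (by simp [bookAdj])
  · rintro ⟨hspine, hpages⟩
    obtain ⟨⟨hu, hv⟩, huv⟩ := by simpa only [spineColorings, mem_filter, mem_product] using hspine
    refine ⟨?_, ?_⟩
    · rintro ((_ | _) | ⟨i, j⟩)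
      exacts [hu, hv, (hpages i).1 j]
    · rintro ((_ | _) | ⟨i, j⟩) ((_ | _) | ⟨i', j'⟩) hadj <;> simp only [bookAdj] at hadj
      · exact absurd rfl hadj
      · exact huv
      · obtain rfl : j' = (0 : Fin (t + 1)) := Fin.ext hadj
        simpa [bookSignature] using ne_mul_symm (hε i') (hpages i').2.2.1
      · exact ne_mul_symm hδ huv
      · exact absurd rfl hadj
      · obtain rfl : j' = Fin.last t := Fin.ext hadj
        simpa [bookSignature] using (hpages i').2.2.2.symm
      · obtain rfl : j = (0 : Fin (t + 1)) := Fin.ext hadj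
        simpa [bookSignature] using (hpages i).2.2.1
      · obtain rfl : j = Fin.last t := Fin.ext hadj
        simpa [bookSignature] using (hpages i).2.2.2
      · obtain ⟨rfl, hjj' | hj'j⟩ := hadj
        · obtain ⟨s, rfl, rfl⟩ := exists_castSucc_succ hjj'
          simpa [bookSignature] using (hpages i).2.1 s
        · obtain ⟨s, rfl, rfl⟩ := exists_castSucc_succ hj'j
          simpa [bookSignature] using ((hpages i).2.1 s).symm

def bookColoringEquiv (S : Finset ℤ) (hδ : δ * δ = 1) (hε : ∀ i, ε i * ε i = 1) :
    {c : BookVertex (t + 3) n → ℤ // (∀ x, c x ∈ S) ∧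
        ∀ x y, bookAdj (t + 3) n x y → c x ≠ bookSignature (t + 3) n δ ε x y * c y} ≃
      Σ p : spineColorings S δ, ∀ i, {d // IsPathColoring S t (ε i * p.1.1) p.1.2 d} where
  toFun c :=
    have h := (isProperBookColoring_iff S hδ hε c.1).1 c.2
    ⟨⟨_, h.1⟩, fun i => ⟨_, h.2 i⟩⟩
  invFun q :=
    ⟨Sum.elim (fun b => cond b q.1.1.2 q.1.1.1) (fun z => (q.2 z.1).1 z.2),
      (isProperBookColoring_iff S hδ hε _).2 ⟨q.1.2, fun i => (q.2 i).2⟩⟩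
  left_inv c := Subtype.ext <| funext fun x => by rcases x with (_ | _) | _ <;> rfl
  right_inv q := rfl

theorem card_bookColorings (S : Finset ℤ) (hδ : δ * δ = 1) (hε : ∀ i, ε i * ε i = 1) :
    Nat.card {c : BookVertex (t + 3) n → ℤ // (∀ x, c x ∈ S) ∧
        ∀ x y, bookAdj (t + 3) n x y → c x ≠ bookSignature (t + 3) n δ ε x y * c y} =
      ∑ p ∈ spineColorings S δ, ∏ i, pathCount S t (ε i * p.1) p.2 := by
  rw [Nat.card_congr (bookColoringEquiv S hδ hε), Nat.card_sigma]
  simp only [Nat.card_pi]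
  exact sum_coe_sort (spineColorings S δ) fun p => ∏ i, pathCount S t (ε i * p.1) p.2

end Book

lemma prod_ite_val_lt {M : Type*} [CommMonoid M] {n l : ℕ} (hl : l ≤ n) (f g : M) :
    ∏ i : Fin n, (if i.val < l then f else g) = f ^ l * g ^ (n - l) := by
  have h := card_filter_add_card_filter_not (s := univ) fun i : Fin n => i.val < l
  rw [Fin.card_filter_val_lt, card_univ, Fintype.card_fin] at h
  rw [prod_ite, prod_const, prod_const, Fin.card_filter_val_lt]
  congr 2 <;> omega

lemma sum_spineColorings_neg {M : Type*} [AddCommMonoid M] {S : Finset ℤ}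
    (hS : ∀ x, -x ∈ S ↔ x ∈ S) (δ : ℤ) (f : ℤ × ℤ → M) :
    ∑ p ∈ spineColorings S δ, f (-p.1, p.2) = ∑ p ∈ spineColorings S (-δ), f p := by
  have hmem : ∀ δ p, p ∈ spineColorings S δ → (-p.1, p.2) ∈ spineColorings S (-δ) := by
    intro δ p hp
    simp only [spineColorings, mem_filter, mem_product] at hp ⊢
    exact ⟨⟨(hS _).2 hp.1.1, hp.1.2⟩, by grind⟩
  refine sum_nbij' (fun p => (-p.1, p.2)) (fun p => (-p.1, p.2)) (hmem δ)
    (fun p hp => by simpa using hmem (-δ) p hp) (by simp) (by simp) (by simp)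

theorem statement12_general (m n l : ℕ) (hm : 3 ≤ m) (hln : l ≤ n - 1)
    (k : ℕ) :
    (Nat.card {c : BookVertex m n → ℤ //
        (∀ x, |c x| ≤ (k : ℤ)) ∧
        ∀ x y, bookAdj m n x y → c x ≠ sigmaL m n l x y * c y} : ℤ) =
      gammaP m (2 * (k : ℤ) + 1) ^ (n - l) *
        (Nat.card {c : BookVertex m l → ℤ //
          (∀ x, |c x| ≤ (k : ℤ)) ∧
          ∀ x y, bookAdj m l x y → c x ≠ sigmaUV m l x y * c y} : ℤ) := by
  obtain ⟨t, rfl⟩ : ∃ t, m = t + 3 := ⟨m - 3, by omega⟩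
  set S : Finset ℤ := Icc (-k) k
  have hS : ∀ x, |x| ≤ (k : ℤ) ↔ x ∈ S := fun x => by simp [S, abs_le]
  have hcard : (#S : ℤ) = 2 * k + 1 := by rw [Int.card_Icc]; omega
  simp_rw [hS, sigmaL_eq_bookSignature, sigmaUV_eq_bookSignature]
  rw [card_bookColorings S (by norm_num) (fun i => by split_ifs <;> norm_num),
    card_bookColorings S (by norm_num) (fun i => by norm_num), ← hcard, Nat.cast_sum, Nat.cast_sum,
    mul_sum, ← sum_spineColorings_neg (fun x => by simp only [← hS, abs_neg]) 1]
  refine sum_congr rfl fun p hp => ?_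
  obtain ⟨⟨hu, hv⟩, huv⟩ := by simpa only [spineColorings, mem_filter, mem_product] using hp
  have hγ : (pathCount S t p.1 p.2 : ℤ) = gammaP (t + 3) #S := by
    rw [pathCount_eq S t hu hv, if_neg (by simpa using huv), add_zero]
  calc ((∏ i : Fin n, pathCount S t ((if i.val < l then -1 else 1) * p.1) p.2 : ℕ) : ℤ)
      = ∏ i : Fin n, if i.val < l then (pathCount S t (-p.1) p.2 : ℤ) else gammaP (t + 3) #S := by
        rw [Nat.cast_prod]
        exact prod_congr rfl fun i _ => by split_ifs <;> simp [hγ]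
    _ = _ := by
        rw [prod_ite_val_lt (by omega), Nat.cast_prod]
        simp [mul_comm]

/-- The number of proper colorings of `(B(m,n), σ_l)` with color set
`{-k, …, -1, 0, 1, …, k}` equals `γ_m(2k+1)^{n-l}` times the number of proper colorings
of `B^{uv}(m,l)` with that color set. -/
theorem statement12 (m n l : ℕ) (hm : 3 ≤ m) (hn : 3 ≤ n) (hl : 2 ≤ l) (hln : l ≤ n - 1)
    (k : ℕ) :
    (Nat.card {c : BookVertex m n → ℤ //
        (∀ x, |c x| ≤ (k : ℤ)) ∧
        ∀ x y, bookAdj m n x y → c x ≠ sigmaL m n l x y * c y} : ℤ) =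
      gammaP m (2 * (k : ℤ) + 1) ^ (n - l) *
        (Nat.card {c : BookVertex m l → ℤ //
          (∀ x, |c x| ≤ (k : ℤ)) ∧
          ∀ x y, bookAdj m l x y → c x ≠ sigmaUV m l x y * c y} : ℤ) :=
  statement12_general m n l hm hln k
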